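/- Let C be a triangulated category carrying a bounded weight structure w and a bounded t-structure t satisfying the transversality properties (a)–(d). Let M and N be objects of the heart C_{w=0}. Then rad_{C_{w=0}}(M,N) = { α ∈ Hom_C(M,N) : H^m(α) = 0 for all m ∈ ℤ }. (Corollary 1.H) -/

import Mathlib

/-!
If `H^m(α) = 0` for all `m`, then every `H^m` sends `𝟙 - α ≫ β` to the identity, so it is an
isomorphism by conservativity of the cohomology functors. Conversely, decompose `M` and `N` into
objects of the semisimple categories `C_{w=0}^{t=d}`. The radical is an ideal, so a component of a
radical `α` between two such objects of the same degree `d` is radical; factoring it as a split epi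
followed by a split mono produces an idempotent `p` with `𝟙 - p` invertible, whence it vanishes.
Components between objects of different degrees are killed by `H^m`, which vanishes on one end.
-/

open CategoryTheory Limits Pretriangulated ZeroObject

namespace Absolute

universe v u

/-- The radical of a preadditive category: `α : M ⟶ N` belongs to the radical if and only if
for every `β : N ⟶ M`, the endomorphism `𝟙 M - β ∘ α` of `M` is an isomorphism. -/
def radical {C : Type u} [Category.{v} C] [Preadditive C] (M N : C) : Set (M ⟶ N) :=
  {α | ∀ β : N ⟶ M, IsIso (𝟙 M - α ≫ β)}

/-- Full subcategories of preadditive categories are preadditive. -/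
instance fullSubcategoryPreadditive {C : Type u} [Category.{v} C] [Preadditive C]
    (Z : C → Prop) : Preadditive (ObjectProperty.FullSubcategory Z) where
  homGroup X Y := Equiv.addCommGroup (α := X ⟶ Y) (β := X.obj ⟶ Y.obj)
    ⟨fun f => f.hom, fun f => ObjectProperty.homMk f, fun _ => rfl, fun _ => rfl⟩
  add_comp _ _ _ f f' g := ObjectProperty.hom_ext _ (Preadditive.add_comp _ _ _ f.hom f'.hom g.hom)
  comp_add _ _ _ f g g' := ObjectProperty.hom_ext _ (Preadditive.comp_add _ _ _ f.hom g.hom g'.hom)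

/-- The property that morphisms `f : A ⟶ M` and `g : M ⟶ B` between objects satisfying `Z`
form a short exact sequence `0 ⟶ A ⟶ M ⟶ B ⟶ 0` in the full subcategory of objects
satisfying `Z`. -/
def IsShortExactInSub {C : Type u} [Category.{v} C] [Preadditive C] (Z : C → Prop)
    {A M B : C} (hA : Z A) (hM : Z M) (hB : Z B) (f : A ⟶ M) (g : M ⟶ B) : Prop :=
  let A' : ObjectProperty.FullSubcategory Z := ⟨A, hA⟩
  let M' : ObjectProperty.FullSubcategory Z := ⟨M, hM⟩
  let B' : ObjectProperty.FullSubcategory Z := ⟨B, hB⟩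
  let f' : A' ⟶ M' := ObjectProperty.homMk f
  let g' : M' ⟶ B' := ObjectProperty.homMk g
  Mono f' ∧ Epi g' ∧ ∃ w : f' ≫ g' = 0, (ShortComplex.mk f' g' w).Exact

variable (C : Type u) [Category.{v} C] [Preadditive C] [HasZeroObject C]
  [HasShift C ℤ] [∀ n : ℤ, (shiftFunctor C n).Additive] [Pretriangulated C]

/-- A bounded weight structure `w` on a triangulated category `C`, given by the classes
`wle n = C_{w ≤ n}` and `wge n = C_{w ≥ n}`. -/
structure BoundedWeightStructure where
  wle : ℤ → Set C
  wge : ℤ → Set C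
  wle_iso : ∀ (n : ℤ) ⦃X Y : C⦄, (X ≅ Y) → X ∈ wle n → Y ∈ wle n
  wge_iso : ∀ (n : ℤ) ⦃X Y : C⦄, (X ≅ Y) → X ∈ wge n → Y ∈ wge n
  wle_summand : ∀ (n : ℤ) ⦃X Y : C⦄ (i : X ⟶ Y) (r : Y ⟶ X),
    i ≫ r = 𝟙 X → Y ∈ wle n → X ∈ wle n
  wge_summand : ∀ (n : ℤ) ⦃X Y : C⦄ (i : X ⟶ Y) (r : Y ⟶ X),
    i ≫ r = 𝟙 X → Y ∈ wge n → X ∈ wge n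
  wle_zero : (0 : C) ∈ wle 0
  wge_zero : (0 : C) ∈ wge 0
  /-- `C_{w ≤ n} := C_{w ≤ 0}[n]` -/
  wle_shift : ∀ (n k : ℤ) (X : C), X ∈ wle n ↔ X⟦k⟧ ∈ wle (n + k)
  wge_shift : ∀ (n k : ℤ) (X : C), X ∈ wge n ↔ X⟦k⟧ ∈ wge (n + k)
  wle_mono : ∀ n : ℤ, wle n ⊆ wle (n + 1)
  wge_anti : ∀ n : ℤ, wge (n + 1) ⊆ wge n
  w_orth : ∀ ⦃X Y : C⦄, X ∈ wle 0 → Y ∈ wge 1 → ∀ f : X ⟶ Y, f = 0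
  w_dec : ∀ M : C, ∃ (A B : C) (f : A ⟶ M) (g : M ⟶ B) (h : B ⟶ A⟦(1 : ℤ)⟧),
    Triangle.mk f g h ∈ (distTriang C) ∧ A ∈ wle 0 ∧ B ∈ wge 1
  w_bounded : ∀ M : C, ∃ m n : ℤ, M ∈ wge m ∧ M ∈ wle n

/-- The heart `C_{w = n}` of a (bounded) weight structure. -/
def BoundedWeightStructure.wEq (w : BoundedWeightStructure C) (n : ℤ) : Set C :=
  w.wle n ∩ w.wge n

/-- A bounded t-structure `t` on a triangulated category `C`, given by the classes
`tle n = C^{t ≤ n}` and `tge n = C^{t ≥ n}`, together with its truncation functors and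
the associated cohomology functors `H m` with values in the heart `C^{t = 0}`. -/
structure BoundedTStructure where
  tle : ℤ → Set C
  tge : ℤ → Set C
  tle_iso : ∀ (n : ℤ) ⦃X Y : C⦄, (X ≅ Y) → X ∈ tle n → Y ∈ tle n
  tge_iso : ∀ (n : ℤ) ⦃X Y : C⦄, (X ≅ Y) → X ∈ tge n → Y ∈ tge n
  /-- `C^{t ≤ n} := C^{t ≤ 0}[-n]`, i.e. the cohomological indexing convention -/
  tle_shift : ∀ (n k : ℤ) (X : C), X ∈ tle n ↔ X⟦k⟧ ∈ tle (n - k)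
  tge_shift : ∀ (n k : ℤ) (X : C), X ∈ tge n ↔ X⟦k⟧ ∈ tge (n - k)
  tle_mono : ∀ n : ℤ, tle n ⊆ tle (n + 1)
  tge_anti : ∀ n : ℤ, tge (n + 1) ⊆ tge n
  t_orth : ∀ ⦃X Y : C⦄, X ∈ tle 0 → Y ∈ tge 1 → ∀ f : X ⟶ Y, f = 0
  t_bounded : ∀ M : C, ∃ m n : ℤ, M ∈ tge m ∧ M ∈ tle n
  /-- truncation functor `τ^{t ≤ m}` -/
  τle : ℤ → C ⥤ C
  /-- truncation functor `τ^{t ≥ m}` -/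
  τge : ℤ → C ⥤ C
  τle_mem : ∀ (m : ℤ) (X : C), (τle m).obj X ∈ tle m
  τge_mem : ∀ (m : ℤ) (X : C), (τge m).obj X ∈ tge m
  τleε : ∀ m : ℤ, τle m ⟶ 𝟭 C
  τgeη : ∀ m : ℤ, 𝟭 C ⟶ τge m
  τ_triangle : ∀ (m : ℤ) (X : C), ∃ h : (τge (m + 1)).obj X ⟶ ((τle m).obj X)⟦(1 : ℤ)⟧,
    Triangle.mk ((τleε m).app X) ((τgeη (m + 1)).app X) h ∈ distTriang C
  /-- the cohomology functors `H^m : C ⥤ C^{t = 0}`, viewed as endofunctors of `C` with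
  values in the heart -/
  H : ℤ → C ⥤ C
  H_additive : ∀ m : ℤ, (H m).Additive
  H_heart : ∀ (m : ℤ) (X : C), (H m).obj X ∈ tle 0 ∧ (H m).obj X ∈ tge 0
  H_shift : ∀ m : ℤ, Nonempty (shiftFunctor C (1 : ℤ) ⋙ H m ≅ H (m + 1))
  H_heart_id : ∀ X : C, X ∈ tle 0 → X ∈ tge 0 → Nonempty ((H 0).obj X ≅ X)
  H_vanish_le : ∀ (m n : ℤ) (X : C), X ∈ tle n → n < m → IsZero ((H m).obj X)
  H_vanish_ge : ∀ (m n : ℤ) (X : C), X ∈ tge n → m < n → IsZero ((H m).obj X)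
  /-- the family of cohomology functors associated to a bounded t-structure is conservative -/
  H_conservative : ∀ ⦃X Y : C⦄ (f : X ⟶ Y), (∀ m : ℤ, IsIso ((H m).map f)) → IsIso f

/-- The intersection `C^{t = m} = C^{t ≤ m} ∩ C^{t ≥ m}`. -/
def BoundedTStructure.tEq (t : BoundedTStructure C) (m : ℤ) : Set C :=
  t.tle m ∩ t.tge m

variable [HasFiniteBiproducts C]

/-- A bounded weight structure and a bounded t-structure on `C` satisfying the
transversality properties (a)–(d). -/
structure TransversalPackage extends BoundedWeightStructure C, BoundedTStructure C where
  /-- (a): each `C_{w = n}^{t = m}` is abelian ... -/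
  wt_abelian : ∀ (n m : ℤ),
    Abelian (ObjectProperty.FullSubcategory (fun X : C => (X ∈ wle n ∧ X ∈ wge n) ∧ (X ∈ tle m ∧ X ∈ tge m)))
  /-- (a): ... and semisimple (every monomorphism splits) ... -/
  wt_semisimple : ∀ (n m : ℤ)
    ⦃X Y : ObjectProperty.FullSubcategory (fun X : C => (X ∈ wle n ∧ X ∈ wge n) ∧ (X ∈ tle m ∧ X ∈ tge m))⦄
    (f : X ⟶ Y), Mono f → ∃ r : Y ⟶ X, f ≫ r = 𝟙 X
  /-- (a): ... and every object of `C_{w = 0}` is isomorphic to a finite direct sum of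
  objects of the categories `C_{w = 0}^{t = m}`, `m ∈ ℤ` -/
  wheart_sum : ∀ X : C, X ∈ wle 0 → X ∈ wge 0 →
    ∃ (k : ℕ) (Y : Fin k → C) (m : Fin k → ℤ),
      (∀ i, (Y i ∈ wle 0 ∧ Y i ∈ wge 0) ∧ (Y i ∈ tle (m i) ∧ Y i ∈ tge (m i))) ∧
      Nonempty (X ≅ ⨁ Y)
  /-- (b): for fixed `m` and `n₁ ≠ n₂`, every morphism from an object of `C_{w = n₁}^{t = m}`
  to an object of `C_{w = n₂}^{t = m}` is zero -/
  wt_hom_vanish : ∀ (m n₁ n₂ : ℤ), n₁ ≠ n₂ → ∀ ⦃X Y : C⦄,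
    X ∈ wle n₁ → X ∈ wge n₁ → X ∈ tle m → X ∈ tge m →
    Y ∈ wle n₂ → Y ∈ wge n₂ → Y ∈ tle m → Y ∈ tge m → ∀ f : X ⟶ Y, f = 0
  /-- (c): every object of `C^{t = m}` admits weight filtrations concentrated at any `n`,
  with outer terms in `C^{t = m}`, which are short exact sequences in `C^{t = m}` -/
  t_weight_filtration : ∀ (m n : ℤ) (M : C) (hM : M ∈ tle m ∧ M ∈ tge m),
    ∃ (A B : C) (hA : A ∈ tle m ∧ A ∈ tge m) (hB : B ∈ tle m ∧ B ∈ tge m)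
      (f : A ⟶ M) (g : M ⟶ B) (δ : B ⟶ A⟦(1 : ℤ)⟧),
      Triangle.mk f g δ ∈ (distTriang C) ∧ A ∈ wle (n - 1) ∧ B ∈ wge n ∧
      IsShortExactInSub (fun X : C => X ∈ tle m ∧ X ∈ tge m) hA hM hB f g
  /-- (d): the truncation functors preserve `C_{w ≤ n}` and `C_{w ≥ n}` -/
  τle_wle : ∀ (m n : ℤ) (X : C), X ∈ wle n → (τle m).obj X ∈ wle n
  τle_wge : ∀ (m n : ℤ) (X : C), X ∈ wge n → (τle m).obj X ∈ wge n
  τge_wle : ∀ (m n : ℤ) (X : C), X ∈ wle n → (τge m).obj X ∈ wle n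
  τge_wge : ∀ (m n : ℤ) (X : C), X ∈ wge n → (τge m).obj X ∈ wge n

lemma _root_.CategoryTheory.Abelian.splitEpiCategory_of_splitMonoCategory {A : Type*} [Category A]
    [Abelian A] [SplitMonoCategory A] : SplitEpiCategory A where
  isSplitEpi_of_epi {X Y} e _ := by
    let k := kernel.ι e
    have := SplitMonoCategory.isSplitMono_of_mono k
    have hk : k ≫ (𝟙 X - retraction k ≫ k) = 0 := by
      rw [Preadditive.comp_sub, IsSplitMono.id_assoc, Category.comp_id, sub_self]
    refine IsSplitEpi.mk' ⟨Abelian.epiDesc e _ hk, (cancel_epi e).1 ?_⟩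
    rw [Abelian.comp_epiDesc_assoc, Preadditive.sub_comp, Category.assoc, kernel.condition,
      comp_zero, sub_zero, Category.id_comp, Category.comp_id]

lemma _root_.CategoryTheory.Functor.map_eq_zero_of_biproduct_components {A B : Type*} [Category A]
    [Preadditive A] [Category B] [Preadditive B] (F : A ⥤ B) [F.Additive] {ι κ : Type}
    [Fintype ι] [Fintype κ] (Y : ι → A) (Z : κ → A) [HasBiproduct Y] [HasBiproduct Z]
    (f : ⨁ Y ⟶ ⨁ Z) (h : ∀ i j, F.map (biproduct.ι Y i ≫ f ≫ biproduct.π Z j) = 0) :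
    F.map f = 0 := by
  have hf : f = ∑ i, ∑ j, biproduct.π Y i ≫ (biproduct.ι Y i ≫ f ≫ biproduct.π Z j) ≫
      biproduct.ι Z j := by
    conv_lhs => rw [← Category.id_comp f, ← Category.comp_id f, ← biproduct.total,
      ← biproduct.total]
    simp only [Preadditive.sum_comp, Preadditive.comp_sum, Category.assoc]
    exact Finset.sum_comm
  rw [hf, F.map_sum]
  refine Finset.sum_eq_zero fun i _ => ?_
  rw [F.map_sum]
  refine Finset.sum_eq_zero fun j _ => ?_
  rw [F.map_comp, F.map_comp, h, zero_comp, comp_zero]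

section Radical

variable {D : Type*} [Category D] [Preadditive D]

-- Jacobson's lemma: the inverse is `𝟙 Y + g ≫ (𝟙 X - f ≫ g)⁻¹ ≫ f`.
lemma isIso_id_sub_comp_comm {X Y : D} (f : X ⟶ Y) (g : Y ⟶ X) [IsIso (𝟙 X - f ≫ g)] :
    IsIso (𝟙 Y - g ≫ f) := by
  set w := inv (𝟙 X - f ≫ g)
  have hw₁ : f ≫ g ≫ w = w - 𝟙 X := by
    have h := IsIso.hom_inv_id (𝟙 X - f ≫ g)
    rw [Preadditive.sub_comp, Category.id_comp, Category.assoc] at h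
    rw [← h]; abel
  have hw₂ : w ≫ f ≫ g = w - 𝟙 X := by
    have h := IsIso.inv_hom_id (𝟙 X - f ≫ g)
    rw [Preadditive.comp_sub, Category.comp_id] at h
    rw [← h]; abel
  refine ⟨𝟙 Y + g ≫ w ≫ f, ?_, ?_⟩
  · calc (𝟙 Y - g ≫ f) ≫ (𝟙 Y + g ≫ w ≫ f) = 𝟙 Y - g ≫ f + g ≫ (w - f ≫ g ≫ w) ≫ f := by
          simp only [Preadditive.sub_comp, Preadditive.comp_add, Preadditive.comp_sub,
            Category.id_comp, Category.comp_id, Category.assoc]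
      _ = 𝟙 Y := by rw [hw₁]; simp
  · calc (𝟙 Y + g ≫ w ≫ f) ≫ (𝟙 Y - g ≫ f) = 𝟙 Y - g ≫ f + g ≫ (w - w ≫ f ≫ g) ≫ f := by
          simp only [Preadditive.add_comp, Preadditive.comp_sub, Preadditive.sub_comp,
            Category.id_comp, Category.comp_id, Category.assoc]
          abel
      _ = 𝟙 Y := by rw [hw₂]; simp

lemma comp_mem_radical {M N Y Z : D} {α : M ⟶ N} (hα : α ∈ radical M N) (γ : Y ⟶ M)
    (δ : N ⟶ Z) : γ ≫ α ≫ δ ∈ radical Y Z := fun β => by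
  have : IsIso (𝟙 M - (α ≫ δ ≫ β) ≫ γ) := by simpa only [Category.assoc] using hα (δ ≫ β ≫ γ)
  simpa only [Category.assoc] using isIso_id_sub_comp_comm (α ≫ δ ≫ β) γ

lemma eq_zero_of_idem_of_isIso_id_sub {X : D} {p : X ⟶ X} (hp : p ≫ p = p)
    [IsIso (𝟙 X - p)] : p = 0 := by
  rw [← Preadditive.IsIso.comp_right_eq_zero p (𝟙 X - p), Preadditive.comp_sub, hp,
    Category.comp_id, sub_self]

-- `f ≫ retraction i ≫ section_ e = e ≫ section_ e` is an idempotent in the radical.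
lemma eq_zero_of_mem_radical_of_fac {X Y I : D} {f : X ⟶ Y} (hf : f ∈ radical X Y)
    (e : X ⟶ I) (i : I ⟶ Y) [IsSplitEpi e] [IsSplitMono i] (hfac : e ≫ i = f) : f = 0 := by
  have hp : f ≫ retraction i ≫ section_ e = e ≫ section_ e := by
    rw [← hfac, Category.assoc, IsSplitMono.id_assoc]
  have hidem : (e ≫ section_ e) ≫ e ≫ section_ e = e ≫ section_ e := by
    rw [Category.assoc, IsSplitEpi.id_assoc]
  have : IsIso (𝟙 X - e ≫ section_ e) := hp ▸ hf (retraction i ≫ section_ e)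
  have he : e = 0 := by
    rw [← Category.comp_id e, ← IsSplitEpi.id e, ← Category.assoc,
      eq_zero_of_idem_of_isIso_id_sub hidem, zero_comp]
  rw [← hfac, he, zero_comp]

lemma mem_radical_fullSubcategory_iff {Z : D → Prop} {X Y : ObjectProperty.FullSubcategory Z}
    (α : X ⟶ Y) : α ∈ radical X Y ↔ α.hom ∈ radical X.obj Y.obj := by
  refine ⟨fun hα β => ?_, fun hα β => ?_⟩
  · have := hα (ObjectProperty.homMk β)
    exact (inferInstance :
      IsIso ((ObjectProperty.ι Z).map (𝟙 X - α ≫ ObjectProperty.homMk β)))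
  · have : IsIso ((ObjectProperty.ι Z).map (𝟙 X - α ≫ β)) := hα β.hom
    exact isIso_of_reflects_iso _ (ObjectProperty.ι Z)

-- The abelian structure need not induce the additive structure of `D`: only compositions are
-- transported back to `D`.
lemma eq_zero_of_mem_radical_of_abelian_fullSubcategory (Z : D → Prop)
    [Abelian (ObjectProperty.FullSubcategory Z)]
    [SplitMonoCategory (ObjectProperty.FullSubcategory Z)] {X Y : D} (hX : Z X) (hY : Z Y)
    {f : X ⟶ Y} (hf : f ∈ radical X Y) : f = 0 := by
  have := Abelian.splitEpiCategory_of_splitMonoCategory (A := ObjectProperty.FullSubcategory Z)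
  let f' : (⟨X, hX⟩ : ObjectProperty.FullSubcategory Z) ⟶ ⟨Y, hY⟩ :=
    ObjectProperty.homMk f
  have := isSplitEpi_of_epi (factorThruImage f')
  have := SplitMonoCategory.isSplitMono_of_mono (image.ι f')
  exact eq_zero_of_mem_radical_of_fac hf ((ObjectProperty.ι Z).map (factorThruImage f'))
    ((ObjectProperty.ι Z).map (image.ι f')) (by rw [← Functor.map_comp, image.fac]; rfl)

end Radical

section

variable {D : Type*} [Category D] [Preadditive D] [HasZeroObject D] [HasShift D ℤ]
  [∀ n : ℤ, (shiftFunctor D n).Additive] [Pretriangulated D]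

lemma BoundedTStructure.isZero_H_obj_of_ne (t : BoundedTStructure D) {m d : ℤ} {Y : D}
    (hY : Y ∈ t.tle d ∧ Y ∈ t.tge d) (h : m ≠ d) : IsZero ((t.H m).obj Y) := by
  rcases h.lt_or_gt with h | h
  · exact t.H_vanish_ge m d Y hY.2 h
  · exact t.H_vanish_le m d Y hY.1 h

lemma BoundedTStructure.mem_radical_of_H_map_eq_zero (t : BoundedTStructure D) {M N : D}
    {α : M ⟶ N} (hα : ∀ m, (t.H m).map α = 0) : α ∈ radical M N := fun β =>
  t.H_conservative _ fun m => by
    have := t.H_additive m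
    rw [Functor.map_sub, Functor.map_comp, hα m, zero_comp, CategoryTheory.Functor.map_id,
      sub_zero]
    infer_instance

variable [HasFiniteBiproducts D]

lemma TransversalPackage.eq_zero_of_mem_radical_of_pure (P : TransversalPackage D) {n m : ℤ}
    {Y Z : D} (hY : (Y ∈ P.wle n ∧ Y ∈ P.wge n) ∧ (Y ∈ P.tle m ∧ Y ∈ P.tge m))
    (hZ : (Z ∈ P.wle n ∧ Z ∈ P.wge n) ∧ (Z ∈ P.tle m ∧ Z ∈ P.tge m)) {f : Y ⟶ Z}
    (hf : f ∈ radical Y Z) : f = 0 := by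
  let S := fun X : D => (X ∈ P.wle n ∧ X ∈ P.wge n) ∧ (X ∈ P.tle m ∧ X ∈ P.tge m)
  let _ := P.wt_abelian n m
  have : SplitMonoCategory (ObjectProperty.FullSubcategory S) := ⟨fun f hf => by
    obtain ⟨r, hr⟩ := P.wt_semisimple n m f hf
    exact IsSplitMono.mk' ⟨r, hr⟩⟩
  exact eq_zero_of_mem_radical_of_abelian_fullSubcategory S hY hZ hf

lemma TransversalPackage.H_map_eq_zero_of_mem_radical (P : TransversalPackage D) {M N : D}
    (hM : M ∈ P.wle 0 ∧ M ∈ P.wge 0) (hN : N ∈ P.wle 0 ∧ N ∈ P.wge 0) {α : M ⟶ N}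
    (hα : α ∈ radical M N) (m : ℤ) : (P.H m).map α = 0 := by
  have := P.H_additive m
  obtain ⟨k, Y, dY, hY, ⟨φ⟩⟩ := P.wheart_sum M hM.1 hM.2
  obtain ⟨l, Z, dZ, hZ, ⟨ψ⟩⟩ := P.wheart_sum N hN.1 hN.2
  suffices h : (P.H m).map (φ.inv ≫ α ≫ ψ.hom) = 0 by
    simpa using congrArg (fun g => (P.H m).map φ.hom ≫ g ≫ (P.H m).map ψ.inv) h
  refine (P.H m).map_eq_zero_of_biproduct_components Y Z _ fun i j => ?_
  by_cases hd : dY i = dZ j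
  · have hcomp :
        biproduct.ι Y i ≫ (φ.inv ≫ α ≫ ψ.hom) ≫ biproduct.π Z j ∈ radical _ _ := by
      simpa only [Category.assoc] using
        comp_mem_radical hα (biproduct.ι Y i ≫ φ.inv) (ψ.hom ≫ biproduct.π Z j)
    rw [P.eq_zero_of_mem_radical_of_pure (hY i) (hd ▸ hZ j) hcomp, Functor.map_zero]
  · by_cases hm : m = dY i
    · exact (P.isZero_H_obj_of_ne (hZ j).2 (hm ▸ hd)).eq_of_tgt _ _
    · exact (P.isZero_H_obj_of_ne (hY i).2 hm).eq_of_src _ _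

end

/-- Corollary 1.H: given a bounded weight structure `w` and a bounded t-structure `t` on `C`
satisfying the transversality properties (a)–(d), and objects `M`, `N` of the heart `C_{w=0}`,
the radical of the heart `rad_{C_{w=0}}(M, N)` consists exactly of those morphisms `α : M ⟶ N`
with `H^m(α) = 0` for all `m ∈ ℤ`. -/
theorem corollary_1H (P : TransversalPackage C) (M N : C)
    (hM : M ∈ P.wle 0 ∧ M ∈ P.wge 0) (hN : N ∈ P.wle 0 ∧ N ∈ P.wge 0) :
    radical (C := ObjectProperty.FullSubcategory (fun X : C => X ∈ P.wle 0 ∧ X ∈ P.wge 0))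
        ⟨M, hM⟩ ⟨N, hN⟩ =
      {α : (⟨M, hM⟩ : ObjectProperty.FullSubcategory (fun X : C => X ∈ P.wle 0 ∧ X ∈ P.wge 0)) ⟶ ⟨N, hN⟩ |
        ∀ m : ℤ, (P.H m).map (show M ⟶ N from α.hom) = 0} := by
  ext α
  rw [mem_radical_fullSubcategory_iff]
  exact ⟨fun hα => P.H_map_eq_zero_of_mem_radical hM hN hα,
    P.mem_radical_of_H_map_eq_zero⟩

end Absolute
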